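/- arXiv:2107.02548 — 3 statements merged into one kernel-verified Lean document; each statement's English description precedes it below -/
import Mathlib

section
/- The direct product G × K of a subgroup separable group G and a finite group K is subgroup separable. -/
open scoped Pointwise

private lemma Subgroup.FG.map_hom {G G' : Type*} [Group G] [Group G'] {H : Subgroup G}
    (h : H.FG) (f : G →* G') : (H.map f).FG := by
  haveI : Group.FG H := (Group.fg_iff_subgroup_fg H).mpr h
  have h2 : Group.FG ((f.comp H.subtype).range) := Group.fg_range _
  rw [MonoidHom.range_comp, Subgroup.range_subtype] at h2
  exact (Group.fg_iff_subgroup_fg _).mp h2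

/-- The direct product of a subgroup separable group `G` and a finite group `K` is
subgroup separable. -/
theorem subgroupSeparable_prod_finite {G K : Type*} [Group G] [Group K] [Finite K]
    (hG : ∀ H : Subgroup G, H.FG →
      ∀ g : G, g ∉ H → ∃ L : Subgroup G, L.FiniteIndex ∧ H ≤ L ∧ g ∉ L) :
    ∀ H : Subgroup (G × K), H.FG →
      ∀ g : G × K, g ∉ H → ∃ L : Subgroup (G × K), L.FiniteIndex ∧ H ≤ L ∧ g ∉ L := by
  classical
  intro H hH g hg
  -- `A` is the projection of `H` to `G`
  set A : Subgroup G := H.map (MonoidHom.fst G K) with hA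
  have hAfg : A.FG := hH.map_hom _
  by_cases hg1 : g.1 ∈ A
  · -- `B = {x : (x, 1) ∈ H}`
    set B : Subgroup G := H.comap (MonoidHom.inl G K) with hB
    have hmemB : ∀ x : G, x ∈ B ↔ ((x, 1) : G × K) ∈ H := fun x => Iff.rfl
    -- the kernel of the projection of `H` to `K`
    set f : ↥H →* K := (MonoidHom.snd G K).comp H.subtype with hf
    haveI : Finite f.range := Subtype.finite
    haveI : f.ker.FiniteIndex := Subgroup.finiteIndex_ker f
    haveI : Group.FG ↥H := (Group.fg_iff_subgroup_fg H).mpr hH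
    haveI : Group.FG ↥f.ker := Subgroup.fg_of_index_ne_zero _
    have hkerfg : f.ker.FG := (Group.fg_iff_subgroup_fg _).mp this
    -- `B` is finitely generated, being the image of the f.g. group `f.ker`
    have hBfg : B.FG := by
      have := hkerfg.map_hom ((MonoidHom.fst G K).comp H.subtype)
      convert this using 1
      ext x
      simp only [Subgroup.mem_map, MonoidHom.mem_ker, hf, MonoidHom.comp_apply,
        Subgroup.coe_subtype, MonoidHom.coe_snd, MonoidHom.coe_fst]
      constructor
      · intro hx
        exact ⟨⟨(x, 1), hx⟩, rfl, rfl⟩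
      · rintro ⟨⟨⟨y, k⟩, hy⟩, hk1, rfl⟩
        simp only at hk1 ⊢
        rw [hmemB]
        simpa [hk1] using hy
    -- `Q` is the finite quotient of `H` by the kernel
    set Q := ↥H ⧸ f.ker with hQ
    haveI : Finite Q := Finite.of_equiv ↥f.range (QuotientGroup.quotientKerEquivRange f).symm.toEquiv
    -- for each class, separate the (first coordinate of the) representative from `B` if possible
    have key : ∀ q : Q, ∃ M : Subgroup G, M.FiniteIndex ∧ B ≤ M ∧
        ((q.out : G × K).1 ∉ B → (q.out : G × K).1 ∉ M) := by
      intro q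
      by_cases hq : (q.out : G × K).1 ∈ B
      · exact ⟨⊤, inferInstance, le_top, fun hn => absurd hq hn⟩
      · obtain ⟨M, h1, h2, h3⟩ := hG B hBfg _ hq
        exact ⟨M, h1, h2, fun _ => h3⟩
    choose Mf hMfi hBM hMsep using key
    haveI : ∀ q : Q, (Mf q).FiniteIndex := hMfi
    set M : Subgroup G := ⨅ q, Mf q with hM
    haveI : M.FiniteIndex := Subgroup.finiteIndex_iInf hMfi
    set N : Subgroup G := M.normalCore with hN
    haveI : N.Normal := Subgroup.normalCore_normal M
    haveI : N.FiniteIndex := Subgroup.finiteIndex_normalCore M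
    -- key property: `N ∩ A ≤ B`
    have hNAB : ∀ x : G, x ∈ A → x ∈ N → x ∈ B := by
      intro x hxA hxN
      obtain ⟨h, hhH, hfst⟩ := hA ▸ hxA
      set hh : ↥H := ⟨h, hhH⟩ with hhh
      set q : Q := QuotientGroup.mk hh with hq
      obtain ⟨t, ht⟩ := QuotientGroup.mk_out_eq_mul f.ker hh
      -- `t` lies in the kernel, so its first coordinate is in `B`
      have htB : ((t : ↥H) : G × K).1 ∈ B := by
        have h2 : ((t : ↥H) : G × K).2 = 1 := t.2
        rw [hmemB]
        have : (( ((t : ↥H) : G × K).1, (1 : K)) : G × K) = ((t : ↥H) : G × K) := by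
          ext <;> simp [h2]
        rw [this]
        exact ((t : ↥H)).2
      by_contra hxB
      -- the representative's first coordinate is not in `B`
      have hrep1 : (q.out : G × K).1 = x * ((t : ↥H) : G × K).1 := by
        rw [ht]
        simp [hhh, ← hfst]
      have hrepB : (q.out : G × K).1 ∉ B := by
        rw [hrep1]
        intro hmem
        exact hxB (by simpa using mul_mem hmem (inv_mem htB))
      -- but the representative's first coordinate lies in `Mf q`
      have hrepM : (q.out : G × K).1 ∈ Mf q := by
        rw [hrep1]
        exact mul_mem
          ((iInf_le Mf q) (M.normalCore_le hxN))
          (hBM q htB)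
      exact hMsep q hrepB hrepM
    -- the separating subgroup
    refine ⟨H ⊔ (N.prod ⊥), ?_, le_sup_left, ?_⟩
    · haveI : ((⊥ : Subgroup K)).FiniteIndex := Subgroup.finiteIndex_of_finite
      haveI : (N.prod (⊥ : Subgroup K)).FiniteIndex := by
        constructor
        rw [Subgroup.index_prod]
        exact mul_ne_zero Subgroup.FiniteIndex.index_ne_zero Subgroup.FiniteIndex.index_ne_zero
      exact Subgroup.finiteIndex_of_le le_sup_right
    · intro hgL
      have : (g : G × K) ∈ (H : Set (G × K)) * ((N.prod ⊥ : Subgroup (G × K)) : Set (G × K)) := by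
        rw [← Subgroup.mul_normal]
        exact hgL
      obtain ⟨h, hhH, n, hnN, hprod⟩ := this
      have hn2 : n.2 = 1 := hnN.2
      have hn1 : n.1 ∈ N := hnN.1
      -- `n.1 = h.1⁻¹ * g.1 ∈ A`, hence `n.1 ∈ B`, hence `g ∈ H`
      have hh1A : h.1 ∈ A := ⟨h, hhH, rfl⟩
      have hn1A : n.1 ∈ A := by
        have : n.1 = h.1⁻¹ * g.1 := by
          rw [← hprod]; simp
        rw [this]
        exact mul_mem (inv_mem hh1A) hg1
      have hn1B : n.1 ∈ B := hNAB n.1 hn1A hn1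
      have hnH : n ∈ H := by
        have : ((n.1, (1 : K)) : G × K) = n := by ext <;> simp [hn2]
        rw [← this]
        exact hn1B
      exact hg (hprod ▸ mul_mem hhH hnH)
  · -- easy case: separate `g.1` from `A` in `G`
    obtain ⟨L₁, hL₁fi, hAL₁, hgL₁⟩ := hG A hAfg g.1 hg1
    refine ⟨L₁.prod ⊤, ?_, ?_, ?_⟩
    · constructor
      rw [Subgroup.index_prod, Subgroup.index_top, mul_one]
      exact hL₁fi.index_ne_zero
    · intro x hx
      exact ⟨hAL₁ ⟨x, hx, rfl⟩, trivial⟩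
    · intro hmem
      exact hgL₁ hmem.1
end

section
/- The free product of two subgroup separable groups is subgroup separable (Burns–Romanovskii theorem for two factors). -/
open Subgroup

/-- Subgroup separability (LERF). -/
def MyLerf (A : Type*) [Group A] : Prop :=
  ∀ H : Subgroup A, H.FG → ∀ g : A, g ∉ H → ∃ K : Subgroup A, K.FiniteIndex ∧ H ≤ K ∧ g ∉ K

/-- Separate a finitely generated subgroup from finitely many elements at once. -/
lemma sep_finset {A : Type*} [Group A] (hA : MyLerf A) (C : Finset A) (D : Finset A)
    (hD : ∀ d ∈ D, d ∉ Subgroup.closure (C : Set A)) :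
    ∃ K : Subgroup A, K.FiniteIndex ∧ Subgroup.closure (C : Set A) ≤ K ∧ ∀ d ∈ D, d ∉ K := by
  classical
  induction D using Finset.induction with
  | empty => exact ⟨⊤, inferInstance, le_top, by simp⟩
  | @insert d D hd ih =>
    obtain ⟨K₁, h1, h2, h3⟩ := ih (fun d hdm => hD d (Finset.mem_insert_of_mem hdm))
    obtain ⟨K₂, g1, g2, g3⟩ := hA (Subgroup.closure (C : Set A)) ⟨C, rfl⟩ d
      (hD d (Finset.mem_insert_self _ _))
    refine ⟨K₁ ⊓ K₂, inferInstance, le_inf h2 g2, ?_⟩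
    intro x hx
    rcases Finset.mem_insert.1 hx with rfl | hx
    · exact fun hmem => g3 hmem.2
    · exact fun hmem => h3 x hx hmem.1

lemma clustering {A S : Type*} [Group A] [MulAction A S] (V : List S)
    (E : List (S × A × S))
    (hE : ∀ e ∈ E, e.1 ∈ V ∧ e.2.2 ∈ V ∧ e.2.1 • e.1 = e.2.2) :
    ∃ (r : S → S) (t : S → A) (C : S → Finset A),
      (∀ v ∈ V, r v ∈ V) ∧
      (∀ v ∈ V, r (r v) = r v) ∧
      (∀ v ∈ V, t v • r v = v) ∧
      (∀ v ∈ V, ∀ c ∈ C (r v), c • (r v) = r v) ∧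
      (∀ e ∈ E, r e.1 = r e.2.2 ∧
        (t e.2.2)⁻¹ * e.2.1 * t e.1 ∈ Subgroup.closure ((C (r e.1) : Set A))) := by
  classical
  induction E with
  | nil =>
    exact ⟨id, fun _ => 1, fun _ => ∅, fun v hv => hv, fun v _ => rfl,
      fun v _ => one_smul _ _, fun v _ c hc => by simp at hc, by simp⟩
  | cons e E ih =>
    obtain ⟨r, t, C, h1, h2, h3, h4, h5⟩ := ih (fun e' he' => hE e' (List.mem_cons_of_mem _ he'))
    obtain ⟨hv₀, hv₀', hact⟩ := hE e (List.mem_cons_self)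
    obtain ⟨v₀, a, v₀'⟩ := e
    dsimp only at hv₀ hv₀' hact ⊢
    by_cases hbb : r v₀ = r v₀'
    · -- same cluster: add a cycle element
      set w : A := (t v₀')⁻¹ * a * t v₀ with hw
      have hww : w • r v₀ = r v₀ := by
        calc w • r v₀ = (t v₀')⁻¹ • a • t v₀ • r v₀ := by rw [hw, mul_smul, mul_smul]
          _ = (t v₀')⁻¹ • v₀' := by rw [h3 v₀ hv₀, hact]
          _ = r v₀ := by
              rw [inv_smul_eq_iff.mpr (h3 v₀' hv₀').symm, ← hbb]
      refine ⟨r, t, fun b => if b = r v₀ then insert w (C b) else C b, h1, h2, h3, ?_, ?_⟩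
      · intro v hv c hc
        dsimp only at hc
        by_cases hb : r v = r v₀
        · rw [if_pos hb] at hc
          rcases Finset.mem_insert.1 hc with rfl | hc
          · rw [hb]; exact hww
          · exact h4 v hv c hc
        · rw [if_neg hb] at hc
          exact h4 v hv c hc
      · intro e' he'
        rcases List.mem_cons.1 he' with rfl | he'
        · dsimp only
          refine ⟨hbb, ?_⟩
          rw [if_pos rfl]
          exact Subgroup.subset_closure (by simp [hw])
        · obtain ⟨hr, hcl⟩ := h5 e' he'
          refine ⟨hr, ?_⟩
          dsimp only
          by_cases hb : r e'.1 = r v₀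
          · rw [if_pos hb]
            exact Subgroup.closure_mono (by intro x hx; simp [hx]) hcl
          · rw [if_neg hb]; exact hcl
    · -- different clusters: merge cluster of v₀' into cluster of v₀
      set b₁ : S := r v₀ with hb₁
      set b₂ : S := r v₀' with hb₂
      have hne : b₁ ≠ b₂ := hbb
      set s : A := (t v₀')⁻¹ * a * t v₀ with hs
      have hsb : s • b₁ = b₂ := by
        calc s • b₁ = (t v₀')⁻¹ • a • t v₀ • b₁ := by rw [hs, mul_smul, mul_smul]
          _ = (t v₀')⁻¹ • v₀' := by rw [hb₁, h3 v₀ hv₀, hact]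
          _ = b₂ := inv_smul_eq_iff.mpr (h3 v₀' hv₀').symm
      have hrb₁ : r b₁ = b₁ := h2 v₀ hv₀
      have hb₁V : b₁ ∈ V := h1 v₀ hv₀
      set φ : A →* A := MonoidHom.mk' (fun x => s⁻¹ * x * s) (by intro a b; group) with hφ
      refine ⟨fun u => if r u = b₂ then b₁ else r u,
              fun u => if r u = b₂ then t u * s else t u,
              fun b => if b = b₁ then (C b₁) ∪ (C b₂).image φ else C b, ?_, ?_, ?_, ?_, ?_⟩
      · intro v hv; dsimp only
        by_cases h : r v = b₂
        · rw [if_pos h]; exact hb₁V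
        · rw [if_neg h]; exact h1 v hv
      · intro v hv; dsimp only
        by_cases h : r v = b₂
        · rw [if_pos h, if_neg (by rw [hrb₁]; exact hne), hrb₁]
        · rw [if_neg h, if_neg (by rw [h2 v hv]; exact h), h2 v hv]
      · intro v hv; dsimp only
        by_cases h : r v = b₂
        · rw [if_pos h, if_pos h, mul_smul, hsb, ← h, h3 v hv]
        · rw [if_neg h, if_neg h, h3 v hv]
      · intro v hv c hc
        dsimp only at hc ⊢
        by_cases h : r v = b₂
        · rw [if_pos h] at hc ⊢
          rw [if_pos rfl] at hc
          rcases Finset.mem_union.1 hc with hc | hc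
          · exact h4 v₀ hv₀ c hc
          · obtain ⟨c', hc', rfl⟩ := Finset.mem_image.1 hc
            have hcb₂ : c' • b₂ = b₂ := h4 v₀' hv₀' c' hc'
            show ((s⁻¹ * c' * s) • b₁ = b₁)
            rw [mul_smul, mul_smul, hsb, hcb₂, ← hsb, inv_smul_smul]
        · rw [if_neg h] at hc ⊢
          by_cases h' : r v = b₁
          · rw [if_pos h'] at hc
            rcases Finset.mem_union.1 hc with hc | hc
            · exact h4 v hv c (by rwa [h'])
            · obtain ⟨c', hc', rfl⟩ := Finset.mem_image.1 hc
              have hcb₂ : c' • b₂ = b₂ := h4 v₀' hv₀' c' hc'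
              rw [h']
              show ((s⁻¹ * c' * s) • b₁ = b₁)
              rw [mul_smul, mul_smul, hsb, hcb₂, ← hsb, inv_smul_smul]
          · rw [if_neg h'] at hc
            exact h4 v hv c hc
      · intro e' he'
        rcases List.mem_cons.1 he' with rfl | he'
        · dsimp only
          rw [if_neg (show ¬ r v₀ = b₂ from hbb), if_pos hb₂.symm, if_pos hb₂.symm,
            if_neg (show ¬ r v₀ = b₂ from hbb)]
          refine ⟨rfl, ?_⟩
          have : (t v₀' * s)⁻¹ * a * t v₀ = 1 := by rw [hs]; group
          rw [this]
          exact Subgroup.one_mem _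
        · obtain ⟨hr, hcl⟩ := h5 e' he'
          dsimp only
          by_cases h : r e'.1 = b₂
          · have h2c : r e'.2.2 = b₂ := by rw [← hr]; exact h
            rw [if_pos h, if_pos h2c, if_pos h, if_pos h2c, if_pos rfl]
            refine ⟨rfl, ?_⟩
            have heq : (t e'.2.2 * s)⁻¹ * e'.2.1 * (t e'.1 * s)
                = φ ((t e'.2.2)⁻¹ * e'.2.1 * t e'.1) := by
              rw [hφ]; simp only [MonoidHom.mk'_apply]; group
            rw [heq]
            have hmap : φ ((t e'.2.2)⁻¹ * e'.2.1 * t e'.1) ∈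
                (Subgroup.closure ((C (r e'.1)) : Set A)).map φ :=
              Subgroup.mem_map_of_mem φ hcl
            rw [MonoidHom.map_closure] at hmap
            refine Subgroup.closure_mono ?_ hmap
            intro x hx
            obtain ⟨c', hc', rfl⟩ := hx
            simp only [Finset.coe_union, Set.mem_union, Finset.coe_image, Set.mem_image]
            right
            exact ⟨c', by rwa [← h, Finset.mem_coe], rfl⟩
          · have h2c : ¬ r e'.2.2 = b₂ := by rw [← hr]; exact h
            rw [if_neg h, if_neg h2c, if_neg h, if_neg h2c]
            refine ⟨hr, ?_⟩
            by_cases h' : r e'.1 = b₁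
            · rw [if_pos h']
              refine Subgroup.closure_mono ?_ (h' ▸ hcl)
              intro x hx; simp [hx]
            · rw [if_neg h']
              exact hcl

universe uA uS

lemma sigma_point_eq {S : Type uS} {A : Type uA} [Group A] (K : S → Subgroup A) (W : Finset S)
    {b b' : S} (hb : b = b') (p : b ∈ W) (p' : b' ∈ W) {x y : A}
    (hxy : x⁻¹ * y ∈ K b) :
    (⟨⟨b, p⟩, (x : A ⧸ K b)⟩ : Σ c : {s // s ∈ W}, A ⧸ K c.1)
      = ⟨⟨b', p'⟩, (y : A ⧸ K b')⟩ := by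
  subst hb
  exact congrArg (fun q => (⟨⟨b, p⟩, q⟩ : Σ c : {s // s ∈ W}, A ⧸ K c.1))
    (QuotientGroup.eq.mpr hxy)

lemma sigma_point_inj {S : Type uS} {A : Type uA} [Group A] (K : S → Subgroup A) (W : Finset S)
    {b b' : S} (p : b ∈ W) (p' : b' ∈ W) {x y : A}
    (h : (⟨⟨b, p⟩, (x : A ⧸ K b)⟩ : Σ c : {s // s ∈ W}, A ⧸ K c.1)
      = ⟨⟨b', p'⟩, (y : A ⧸ K b')⟩) :
    b = b' ∧ x⁻¹ * y ∈ K b := by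
  have hb : b = b' := congrArg (fun z => z.1.1) h
  subst hb
  refine ⟨rfl, ?_⟩
  have h2 := (Sigma.mk.inj_iff.1 h).2
  exact QuotientGroup.eq.1 (eq_of_heq h2)

/-- Completion: build a finite `A`-set realizing the given constraints with `V` embedded. -/
lemma completion {A : Type uA} {S : Type uS} [Group A] [MulAction A S] (hA : MyLerf A)
    (V : List S) (E : List (S × A × S))
    (hE : ∀ e ∈ E, e.1 ∈ V ∧ e.2.2 ∈ V ∧ e.2.1 • e.1 = e.2.2) :
    ∃ (X : Type (max uA uS)) (_ : Finite X) (ρ : A →* Equiv.Perm X) (ι : S → X),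
      (∀ v ∈ V, ∀ v' ∈ V, ι v = ι v' → v = v') ∧
      (∀ e ∈ E, ρ e.2.1 (ι e.1) = ι e.2.2) := by
  classical
  obtain ⟨r, t, C, h1, h2, h3, h4, h5⟩ := clustering V E hE
  -- the "bad elements" for each base
  set Db : S → Finset A := fun b =>
    ((V.toFinset ×ˢ V.toFinset).filter
      (fun p => r p.1 = b ∧ r p.2 = b ∧ p.1 ≠ p.2)).image (fun p => (t p.1)⁻¹ * t p.2)
    with hDb
  have hDgood : ∀ v ∈ V, ∀ d ∈ Db (r v), d ∉ Subgroup.closure ((C (r v) : Set A)) := by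
    intro v hv d hd hmem
    obtain ⟨p, hp, rfl⟩ := Finset.mem_image.1 hd
    obtain ⟨hpmem, hr1, hr2, hne⟩ := Finset.mem_filter.1 hp
    have hp1V : p.1 ∈ V := List.mem_toFinset.1 (Finset.mem_product.1 hpmem).1
    have hp2V : p.2 ∈ V := List.mem_toFinset.1 (Finset.mem_product.1 hpmem).2
    -- closure (C (r v)) stabilizes r v
    have hstab : ((t p.1)⁻¹ * t p.2) • (r v) = r v := by
      have hle : Subgroup.closure ((C (r v) : Set A)) ≤ MulAction.stabilizer A (r v) := by
        rw [Subgroup.closure_le]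
        intro c hc
        exact h4 v hv c hc
      exact hle hmem
    apply hne
    have e1 : t p.1 • r v = p.1 := by rw [← hr1] at *; exact h3 p.1 hp1V
    have e2 : t p.2 • r v = p.2 := by rw [← hr2] at *; exact h3 p.2 hp2V
    rw [mul_smul] at hstab
    calc p.1 = t p.1 • r v := e1.symm
      _ = t p.1 • (t p.1)⁻¹ • t p.2 • r v := by rw [hstab]
      _ = t p.2 • r v := by rw [smul_inv_smul]
      _ = p.2 := e2
  -- choose a finite-index subgroup for each base
  have hK : ∀ b : S, ∃ K : Subgroup A, (∃ v ∈ V, r v = b) →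
      (K.FiniteIndex ∧ Subgroup.closure ((C b : Set A)) ≤ K ∧ ∀ d ∈ Db b, d ∉ K) := by
    intro b
    by_cases hb : ∃ v ∈ V, r v = b
    · obtain ⟨v, hv, rfl⟩ := hb
      obtain ⟨K, hK1, hK2, hK3⟩ := sep_finset hA (C (r v)) (Db (r v)) (hDgood v hv)
      exact ⟨K, fun _ => ⟨hK1, hK2, hK3⟩⟩
    · exact ⟨⊤, fun h => absurd h hb⟩
  choose K hKspec using hK
  -- the index type of bases
  set BT := {b : S // b ∈ (V.toFinset.image r)} with hBT
  have hbase : ∀ b : BT, ∃ v ∈ V, r v = b.1 := by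
    rintro ⟨b, hb⟩
    obtain ⟨v, hv, rfl⟩ := Finset.mem_image.1 hb
    exact ⟨v, List.mem_toFinset.1 hv, rfl⟩
  haveI hFI : ∀ b : BT, (K b.1).FiniteIndex := fun b => (hKspec b.1 (hbase b)).1
  haveI : ∀ b : BT, Finite (A ⧸ K b.1) := fun b => (K b.1).finite_quotient_of_finiteIndex
  haveI : Fintype BT := FinsetCoe.fintype _
  haveI hXfin : Finite (Option (Σ b : BT, A ⧸ K b.1)) :=
    Finite.of_equiv _ (Equiv.optionEquivSumPUnit.{0,_} _).symm
  refine ⟨Option (Σ b : BT, A ⧸ K b.1), hXfin, ?_⟩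
  -- the permutation action
  set ρ : A →* Equiv.Perm (Option (Σ b : BT, A ⧸ K b.1)) :=
    MonoidHom.mk' (fun a => Equiv.optionCongr (Equiv.sigmaCongrRight
      (fun b => MulAction.toPermHom A (A ⧸ K b.1) a)))
      (by
        intro a b
        ext x
        cases x with
        | none => simp
        | some y =>
          cases y with
          | mk b' q => simp [mul_smul]) with hρ
  set ι : S → Option (Σ b : BT, A ⧸ K b.1) := fun v =>
    if h : v ∈ V then
      some ⟨⟨r v, Finset.mem_image_of_mem r (List.mem_toFinset.2 h)⟩, ((t v : A) : A ⧸ K (r v))⟩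
    else none with hι
  refine ⟨ρ, ι, ?_, ?_⟩
  · -- injectivity on V
    intro v hv v' hv' hvv'
    rw [hι] at hvv'
    simp only [dif_pos hv, dif_pos hv'] at hvv'
    have hsig := Option.some_injective _ hvv'
    obtain ⟨hfst, hsnd⟩ := sigma_point_inj _ _ _ _ hsig
    by_contra hne
    have hdmem : (t v)⁻¹ * t v' ∈ Db (r v) := by
      rw [hDb]
      refine Finset.mem_image.2 ⟨(v, v'), ?_, rfl⟩
      exact Finset.mem_filter.2 ⟨Finset.mem_product.2
        ⟨List.mem_toFinset.2 hv, List.mem_toFinset.2 hv'⟩, rfl, hfst.symm, hne⟩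
    exact (hKspec (r v) ⟨v, hv, rfl⟩).2.2 _ hdmem hsnd
  · -- constraints
    intro e he
    obtain ⟨he1, he2, _⟩ := hE e he
    obtain ⟨hr, hcl⟩ := h5 e he
    rw [hι]
    simp only [dif_pos he1, dif_pos he2]
    have hKmem : (e.2.1 * t e.1)⁻¹ * t e.2.2 ∈ K (r e.1) := by
      have hm : (t e.2.2)⁻¹ * e.2.1 * t e.1 ∈ K (r e.1) :=
        (hKspec (r e.1) ⟨e.1, he1, rfl⟩).2.1 hcl
      have h2' := (K (r e.1)).inv_mem hm
      simpa [mul_assoc] using h2'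
    have hsmul : e.2.1 • ((t e.1 : A) : A ⧸ K (r e.1)) = ((e.2.1 * t e.1 : A) : A ⧸ K (r e.1)) := by
      rw [← smul_eq_mul]
      exact MulAction.Quotient.smul_mk _ _ _
    rw [hρ]
    simp only [MonoidHom.mk'_apply, Equiv.optionCongr_apply, Option.map_some,
      Equiv.sigmaCongrRight_apply, MulAction.toPermHom_apply, MulAction.toPerm_apply]
    rw [hsmul]
    exact congrArg some (sigma_point_eq K _ hr _ _ hKmem)

/-- Burns–Romanovskii for two factors: the free product of two subgroup separable groups
is subgroup separable. -/
theorem subgroupSeparable_coprod {A B : Type*} [Group A] [Group B]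
    (hA : ∀ H : Subgroup A, H.FG →
      ∀ g : A, g ∉ H → ∃ K : Subgroup A, K.FiniteIndex ∧ H ≤ K ∧ g ∉ K)
    (hB : ∀ H : Subgroup B, H.FG →
      ∀ g : B, g ∉ H → ∃ K : Subgroup B, K.FiniteIndex ∧ H ≤ K ∧ g ∉ K) :
    ∀ H : Subgroup (Monoid.Coprod A B), H.FG →
      ∀ g : Monoid.Coprod A B, g ∉ H →
        ∃ K : Subgroup (Monoid.Coprod A B), K.FiniteIndex ∧ H ≤ K ∧ g ∉ K := by
  classical
  intro H hFG g hg
  obtain ⟨T, hT⟩ := hFG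
  set L : A ⊕ B → (Monoid.Coprod A B) := Sum.elim (⇑(Monoid.Coprod.inl : A →* (Monoid.Coprod A B))) (⇑(Monoid.Coprod.inr : B →* (Monoid.Coprod A B)))
    with hL
  set P : List (A ⊕ B) → (Monoid.Coprod A B) := fun l => (l.map L).prod with hP
  have hPcons : ∀ (x : A ⊕ B) (s : List (A ⊕ B)), P (x :: s) = L x * P s := by
    intro x s; rw [hP]; simp
  have hword : ∀ w : (Monoid.Coprod A B), ∃ l : List (A ⊕ B), P l = w := by
    intro w
    induction w using Monoid.Coprod.induction_on with
    | inl m => exact ⟨[Sum.inl m], by simp [hP, hL]⟩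
    | inr n => exact ⟨[Sum.inr n], by simp [hP, hL]⟩
    | mul x y ihx ihy =>
      obtain ⟨l₁, hl₁⟩ := ihx
      obtain ⟨l₂, hl₂⟩ := ihy
      refine ⟨l₁ ++ l₂, ?_⟩
      show (List.map L (l₁ ++ l₂)).prod = x * y
      rw [List.map_append, List.prod_append]
      exact congrArg₂ (· * ·) hl₁ hl₂
  choose wd hwd using hword
  set S := (Monoid.Coprod A B) ⧸ H with hS
  set x₀ : S := ((1 : (Monoid.Coprod A B)) : (Monoid.Coprod A B) ⧸ H) with hx₀
  letI actA : MulAction A S := MulAction.compHom S (Monoid.Coprod.inl : A →* (Monoid.Coprod A B))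
  letI actB : MulAction B S := MulAction.compHom S (Monoid.Coprod.inr : B →* (Monoid.Coprod A B))
  have hsmulA : ∀ (a : A) (y : S), a • y = (Monoid.Coprod.inl a : (Monoid.Coprod A B)) • y := fun _ _ => rfl
  have hsmulB : ∀ (b : B) (y : S), b • y = (Monoid.Coprod.inr b : (Monoid.Coprod A B)) • y := fun _ _ => rfl
  set Wl : List (List (A ⊕ B)) := wd g :: T.toList.map wd with hWl
  set Vl : List S := Wl.flatMap (fun l => l.tails.map (fun s => P s • x₀)) with hVl
  have hVmem : ∀ l ∈ Wl, ∀ s : List (A ⊕ B), s <:+ l → P s • x₀ ∈ Vl := by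
    intro l hl s hs
    rw [hVl]
    exact List.mem_flatMap.2 ⟨l, hl, List.mem_map.2 ⟨s, (List.mem_tails _ _).2 hs, rfl⟩⟩
  set EA : List (S × A × S) := Wl.flatMap (fun l => l.tails.filterMap (fun tl =>
    match tl with
    | Sum.inl a :: s => some (P s • x₀, a, P (Sum.inl a :: s) • x₀)
    | _ => none)) with hEA
  set EB : List (S × B × S) := Wl.flatMap (fun l => l.tails.filterMap (fun tl =>
    match tl with
    | Sum.inr b :: s => some (P s • x₀, b, P (Sum.inr b :: s) • x₀)
    | _ => none)) with hEB
  have hEAmem : ∀ l ∈ Wl, ∀ (a : A) (s : List (A ⊕ B)), (Sum.inl a :: s) <:+ l →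
      (P s • x₀, a, P (Sum.inl a :: s) • x₀) ∈ EA := by
    intro l hl a s hs
    rw [hEA]
    exact List.mem_flatMap.2 ⟨l, hl, List.mem_filterMap.2 ⟨Sum.inl a :: s, (List.mem_tails _ _).2 hs, rfl⟩⟩
  have hEBmem : ∀ l ∈ Wl, ∀ (b : B) (s : List (A ⊕ B)), (Sum.inr b :: s) <:+ l →
      (P s • x₀, b, P (Sum.inr b :: s) • x₀) ∈ EB := by
    intro l hl b s hs
    rw [hEB]
    exact List.mem_flatMap.2 ⟨l, hl, List.mem_filterMap.2 ⟨Sum.inr b :: s, (List.mem_tails _ _).2 hs, rfl⟩⟩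
  have hEAgood : ∀ e ∈ EA, e.1 ∈ Vl ∧ e.2.2 ∈ Vl ∧ e.2.1 • e.1 = e.2.2 := by
    intro e he
    rw [hEA] at he
    obtain ⟨l, hl, he⟩ := List.mem_flatMap.1 he
    obtain ⟨tl, htl, he⟩ := List.mem_filterMap.1 he
    match tl, he with
    | Sum.inl a :: s, he =>
      obtain rfl := Option.some_injective _ he
      have hsuf : (Sum.inl a :: s) <:+ l := (List.mem_tails _ _).1 htl
      have hsuf' : s <:+ l := (List.suffix_cons _ _).trans hsuf
      refine ⟨hVmem l hl s hsuf', hVmem l hl _ hsuf, ?_⟩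
      show a • (P s • x₀) = P (Sum.inl a :: s) • x₀
      rw [hsmulA, smul_smul, hPcons]
      rfl
  have hEBgood : ∀ e ∈ EB, e.1 ∈ Vl ∧ e.2.2 ∈ Vl ∧ e.2.1 • e.1 = e.2.2 := by
    intro e he
    rw [hEB] at he
    obtain ⟨l, hl, he⟩ := List.mem_flatMap.1 he
    obtain ⟨tl, htl, he⟩ := List.mem_filterMap.1 he
    match tl, he with
    | Sum.inr b :: s, he =>
      obtain rfl := Option.some_injective _ he
      have hsuf : (Sum.inr b :: s) <:+ l := (List.mem_tails _ _).1 htl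
      have hsuf' : s <:+ l := (List.suffix_cons _ _).trans hsuf
      refine ⟨hVmem l hl s hsuf', hVmem l hl _ hsuf, ?_⟩
      show b • (P s • x₀) = P (Sum.inr b :: s) • x₀
      rw [hsmulB, smul_smul, hPcons]
      rfl
  obtain ⟨XA, hXAfin, ρA, ιA, injA, consA⟩ := completion hA Vl EA hEAgood
  obtain ⟨XB, hXBfin, ρB, ιB, injB, consB⟩ := completion hB Vl EB hEBgood
  -- glue the two finite actions along Vl
  haveI := hXAfin
  haveI := hXBfin
  set VT := {x : S // x ∈ Vl} with hVT
  set jA : VT → XA := fun v => ιA v.1 with hjA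
  set jB : VT → XB := fun v => ιB v.1 with hjB
  have hjAinj : Function.Injective jA := fun v v' h =>
    Subtype.ext (injA v.1 v.2 v'.1 v'.2 h)
  have hjBinj : Function.Injective jB := fun v v' h =>
    Subtype.ext (injB v.1 v.2 v'.1 v'.2 h)
  set Bc := {x : XB // x ∉ Set.range jB} with hBc
  set eB : VT ⊕ Bc ≃ XB :=
    ((Equiv.ofInjective jB hjBinj).sumCongr (Equiv.refl Bc)).trans
      (Equiv.sumCompl (· ∈ Set.range jB)) with heBdef
  have heB : ∀ v : VT, eB (Sum.inl v) = jB v := by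
    intro v
    rw [heBdef]
    rfl
  set X := XA ⊕ Bc with hX
  haveI hXfin : Finite X := by
    rw [hX]
    infer_instance
  set mA : XA ↪ X := Function.Embedding.inl with hmAdef
  have hmA : ∀ z : XA, mA z = Sum.inl z := fun z => rfl
  set jAemb : VT ↪ XA := ⟨jA, hjAinj⟩ with hjAemb
  set mB : XB ↪ X := eB.symm.toEmbedding.trans (jAemb.sumMap (Function.Embedding.refl Bc))
    with hmBdef
  have hmBv : ∀ v : VT, mB (jB v) = Sum.inl (jA v) := by
    intro v
    have h1 : eB.symm (jB v) = Sum.inl v := by rw [← heB v, Equiv.symm_apply_apply]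
    rw [hmBdef, Function.Embedding.trans_apply]
    simp only [Equiv.coe_toEmbedding]
    rw [h1]
    rfl
  set ΦA : A →* Equiv.Perm X := (Equiv.Perm.viaEmbeddingHom mA).comp ρA with hΦA
  set ΦB : B →* Equiv.Perm X := (Equiv.Perm.viaEmbeddingHom mB).comp ρB with hΦB
  set Φ : (Monoid.Coprod A B) →* Equiv.Perm X := Monoid.Coprod.lift ΦA ΦB with hΦ
  set pt : S → X := fun y => Sum.inl (ιA y) with hpt
  -- the chain computation
  have chain : ∀ s : List (A ⊕ B), ∀ l ∈ Wl, s <:+ l → Φ (P s) (pt x₀) = pt (P s • x₀) := by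
    intro s
    induction s with
    | nil =>
      intro l hl _
      have h1 : P [] = 1 := by rw [hP]; simp
      rw [h1, map_one, one_smul]
      rfl
    | cons x s ih =>
      intro l hl hsuf
      have hsuf' : s <:+ l := (List.suffix_cons _ _).trans hsuf
      have ihv := ih l hl hsuf'
      rw [hPcons, map_mul, Equiv.Perm.mul_apply, ihv]
      cases x with
      | inl a =>
        have hcons := consA _ (hEAmem l hl a s hsuf)
        dsimp only at hcons
        rw [hPcons (Sum.inl a) s] at hcons
        show Φ (L (Sum.inl a)) (pt (P s • x₀)) = pt ((L (Sum.inl a) * P s) • x₀)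
        have h0 : pt (P s • x₀) = mA (ιA (P s • x₀)) := rfl
        rw [show L (Sum.inl a) = (Monoid.Coprod.inl a : Monoid.Coprod A B) from rfl, hΦ,
          Monoid.Coprod.lift_apply_inl, hΦA, MonoidHom.comp_apply,
          Equiv.Perm.viaEmbeddingHom_apply, h0, Equiv.Perm.viaEmbedding_apply, hcons]
        rfl
      | inr b =>
        have hcons := consB _ (hEBmem l hl b s hsuf)
        dsimp only at hcons
        set vs : VT := ⟨P s • x₀, hVmem l hl s hsuf'⟩ with hvs
        set vs' : VT := ⟨P (Sum.inr b :: s) • x₀, hVmem l hl _ hsuf⟩ with hvs'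
        have h3 : ρB b (jB vs) = jB vs' := hcons
        show Φ (L (Sum.inr b)) (pt (P s • x₀)) = pt ((L (Sum.inr b) * P s) • x₀)
        have h2 : pt (P s • x₀) = mB (jB vs) := (hmBv vs).symm
        rw [show L (Sum.inr b) = (Monoid.Coprod.inr b : Monoid.Coprod A B) from rfl, hΦ,
          Monoid.Coprod.lift_apply_inr, hΦB, MonoidHom.comp_apply,
          Equiv.Perm.viaEmbeddingHom_apply, h2, Equiv.Perm.viaEmbedding_apply, h3, hmBv vs']
        have hps : (P (Sum.inr b :: s) • x₀) = (Monoid.Coprod.inr b * P s) • x₀ := by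
          rw [hPcons]
          rfl
        show pt (P (Sum.inr b :: s) • x₀) = _
        exact congrArg pt hps
  have hx₀V : x₀ ∈ Vl := by
    have := hVmem (wd g) (List.mem_cons_self) [] List.nil_suffix
    have h1 : P [] = 1 := by rw [hP]; simp
    rwa [h1, one_smul] at this
  have hgx₀V : g • x₀ ∈ Vl := by
    have := hVmem (wd g) (List.mem_cons_self) (wd g) (List.suffix_refl _)
    rwa [hwd g] at this
  have hchain_elt : ∀ w : (Monoid.Coprod A B), wd w ∈ Wl → Φ w (pt x₀) = pt (w • x₀) := by
    intro w hw
    have := chain (wd w) (wd w) hw (List.suffix_refl _)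
    rwa [hwd w] at this
  haveI : Finite (Equiv.Perm X) := inferInstance
  refine ⟨Subgroup.comap Φ (MulAction.stabilizer (Equiv.Perm X) (pt x₀)), ?_, ?_, ?_⟩
  · constructor
    rw [Subgroup.index_comap]
    show ((MulAction.stabilizer (Equiv.Perm X) (pt x₀)).subgroupOf Φ.range).index ≠ 0
    exact Subgroup.index_ne_zero_of_finite
  · rw [← hT, Subgroup.closure_le]
    intro τ hτ
    have hτH : τ ∈ H := hT ▸ Subgroup.subset_closure hτ
    have hτW : wd τ ∈ Wl := by
      rw [hWl]
      exact List.mem_cons_of_mem _ (List.mem_map.2 ⟨τ, Finset.mem_toList.2 (Finset.mem_coe.1 hτ), rfl⟩)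
    have h1 := hchain_elt τ hτW
    have h2 : τ • x₀ = x₀ := by
      rw [hx₀]
      rw [MulAction.Quotient.smul_mk]
      refine QuotientGroup.eq.2 ?_
      simpa using H.inv_mem hτH
    rw [h2] at h1
    show τ ∈ Subgroup.comap Φ (MulAction.stabilizer (Equiv.Perm X) (pt x₀))
    rw [Subgroup.mem_comap, MulAction.mem_stabilizer_iff, Equiv.Perm.smul_def]
    exact h1
  · intro hgK
    rw [Subgroup.mem_comap, MulAction.mem_stabilizer_iff] at hgK
    rw [Equiv.Perm.smul_def] at hgK
    have h1 := hchain_elt g (List.mem_cons_self)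
    rw [hgK] at h1
    have h2 : ιA (g • x₀) = ιA x₀ := by
      have := h1.symm
      rw [hpt] at this
      exact Sum.inl_injective this
    have h3 : g • x₀ = x₀ := injA _ hgx₀V _ hx₀V h2
    apply hg
    rw [hx₀, MulAction.Quotient.smul_mk] at h3
    have := QuotientGroup.eq.1 h3
    simpa using this
end

section
/- A finite free product of subgroup separable groups is subgroup separable (Burns–Romanovskii theorem). -/
open Monoid Subgroup

universe u v w

namespace BurnsRom

variable {Γ : Type u} [Group Γ] {Ω : Type v}

/-- Packaged data: a finite `Γ`-set (via a hom to permutations) together with a map from `Ω`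
injective on `S` and equivariant for moves by elements of `A` staying inside `S`. -/
structure SepExt (ρ : Γ →* Equiv.Perm Ω) (S : Set Ω) (A : Set Γ) where
  Y : Type (max u v)
  fin : Finite Y
  π : Γ →* Equiv.Perm Y
  ψ : Ω → Y
  inj : Set.InjOn ψ S
  equiv : ∀ a ∈ A, ∀ s ∈ S, ρ a s ∈ S → π a (ψ s) = ψ (ρ a s)

variable (ρ : Γ →* Equiv.Perm Ω)

/-- The orbit equivalence relation of the action. -/
def sd : Setoid Ω :=
  ⟨fun x y => ∃ a : Γ, ρ a y = x,
    ⟨fun x => ⟨1, by simp⟩,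
     fun {x y} h => by
      obtain ⟨a, ha⟩ := h
      refine ⟨a⁻¹, ?_⟩
      rw [map_inv]
      simp [← ha],
     fun {x y z} h h' => by
      obtain ⟨a, ha⟩ := h
      obtain ⟨b, hb⟩ := h'
      refine ⟨a * b, ?_⟩
      rw [map_mul]
      simp [hb, ha]⟩⟩

/-- Orbit representative. -/
noncomputable def rp (s : Ω) : Ω := (Quotient.mk (sd ρ) s).out

lemma rp_rel (s : Ω) : ∃ a : Γ, ρ a (rp ρ s) = s := by
  have h : Quotient.mk (sd ρ) ((Quotient.mk (sd ρ) s).out) = Quotient.mk (sd ρ) s :=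
    Quotient.out_eq _
  exact (sd ρ).iseqv.symm (Quotient.exact h)

lemma rp_eq (a : Γ) (s : Ω) : rp ρ (ρ a s) = rp ρ s := by
  unfold rp
  congr 1
  exact Quotient.sound ⟨a, rfl⟩

/-- A chosen element carrying the representative to the point. -/
noncomputable def wit (s : Ω) : Γ := (rp_rel ρ s).choose

lemma wit_spec (s : Ω) : ρ (wit ρ s) (rp ρ s) = s := (rp_rel ρ s).choose_spec

variable (S : Set Ω) (A : Set Γ)

/-- Generators of the finitely generated "move" subgroup at a representative `r`. -/
def Egen (r : Ω) : Set Γ :=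
  {x | ∃ a ∈ A, ∃ s ∈ S, ρ a s ∈ S ∧ rp ρ s = r ∧ x = (wit ρ (ρ a s))⁻¹ * a * wit ρ s}

/-- Elements that must stay outside the finite index subgroup at `r`. -/
def Bad (r : Ω) : Set Γ :=
  {x | ∃ s ∈ S, ∃ s' ∈ S, s ≠ s' ∧ rp ρ s = r ∧ rp ρ s' = r ∧ x = (wit ρ s')⁻¹ * wit ρ s}

/-- Stabilizer of `r` pulled back along `ρ`. -/
def St (r : Ω) : Subgroup Γ := (MulAction.stabilizer (Equiv.Perm Ω) r).comap ρ

lemma mem_St {r x} : x ∈ St ρ r ↔ ρ x r = r := by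
  simp [St, MulAction.mem_stabilizer_iff, Equiv.Perm.smul_def]

lemma Egen_finite (hS : S.Finite) (hA : A.Finite) (r : Ω) : (Egen ρ S A r).Finite := by
  refine ((hA.prod hS).image fun p : Γ × Ω => (wit ρ (ρ p.1 p.2))⁻¹ * p.1 * wit ρ p.2).subset ?_
  rintro x ⟨a, ha, s, hs, _, _, rfl⟩
  exact ⟨(a, s), ⟨ha, hs⟩, rfl⟩

lemma Bad_finite (hS : S.Finite) (r : Ω) : (Bad ρ S r).Finite := by
  refine ((hS.prod hS).image fun p : Ω × Ω => (wit ρ p.2)⁻¹ * wit ρ p.1).subset ?_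
  rintro x ⟨s, hs, s', hs', _, _, _, rfl⟩
  exact ⟨(s, s'), ⟨hs, hs'⟩, rfl⟩

lemma Egen_sub_St (r : Ω) : Egen ρ S A r ⊆ ↑(St ρ r) := by
  rintro x ⟨a, _, s, _, _, hr, rfl⟩
  rw [SetLike.mem_coe, mem_St]
  have h1 : ρ (wit ρ s) r = s := by rw [← hr]; exact wit_spec ρ s
  have h2 : rp ρ (ρ a s) = r := by rw [rp_eq, hr]
  have h3 : ρ (wit ρ (ρ a s)) r = ρ a s := by
    conv_lhs => rw [← h2]
    exact wit_spec ρ (ρ a s)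
  rw [map_mul, map_mul, map_inv, Equiv.Perm.mul_apply, Equiv.Perm.mul_apply, h1,
    Equiv.Perm.inv_def, Equiv.symm_apply_eq]
  exact h3.symm

lemma Bad_not_St (r : Ω) {b : Γ} (hb : b ∈ Bad ρ S r) : b ∉ St ρ r := by
  obtain ⟨s, _, s', _, hne, hr, hr', rfl⟩ := hb
  intro h
  rw [mem_St, map_mul, map_inv, Equiv.Perm.mul_apply] at h
  have h1 : ρ (wit ρ s) r = s := by rw [← hr]; exact wit_spec ρ s
  have h1' : ρ (wit ρ s') r = s' := by rw [← hr']; exact wit_spec ρ s'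
  rw [h1] at h
  have h2 := congrArg (ρ (wit ρ s')) h
  rw [Equiv.Perm.inv_def, Equiv.apply_symm_apply, h1'] at h2
  exact hne h2

lemma exists_sepExt
    (hsep : ∀ L : Subgroup Γ, L.FG → ∀ a : Γ, a ∉ L → ∃ K : Subgroup Γ,
      K.FiniteIndex ∧ L ≤ K ∧ a ∉ K)
    (hS : S.Finite) (hA : A.Finite) : Nonempty (SepExt ρ S A) := by
  classical
  set L : Ω → Subgroup Γ := fun r => Subgroup.closure (Egen ρ S A r) with hLdef
  have hLfg : ∀ r, (L r).FG := fun r =>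
    (Subgroup.fg_iff _).2 ⟨Egen ρ S A r, rfl, Egen_finite ρ S A hS hA r⟩
  have hLSt : ∀ r, L r ≤ St ρ r := fun r => (Subgroup.closure_le _).2 (Egen_sub_St ρ S A r)
  have hKex : ∀ r, ∀ b : Γ, b ∈ Bad ρ S r → ∃ K : Subgroup Γ,
      K.FiniteIndex ∧ L r ≤ K ∧ b ∉ K := fun r b hb =>
    hsep (L r) (hLfg r) b (fun hbL => Bad_not_St ρ S r hb (hLSt r hbL))
  choose K hK1 hK2 hK3 using hKex
  set M : Ω → Subgroup Γ := fun r => ⨅ b : (Bad ρ S r), K r b.1 b.2 with hMdef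
  have hMfi : ∀ r, (M r).FiniteIndex := by
    intro r
    haveI := (Bad_finite ρ S hS r).to_subtype
    exact Subgroup.finiteIndex_iInf fun b => hK1 r b.1 b.2
  have hLM : ∀ r, L r ≤ M r := fun r => le_iInf fun b => hK2 r b.1 b.2
  have hBadM : ∀ r, ∀ b : Γ, b ∈ Bad ρ S r → b ∉ M r := by
    intro r b hb hm
    exact hK3 r b hb (iInf_le (fun b : (Bad ρ S r) => K r b.1 b.2) ⟨b, hb⟩ hm)
  set R : Set Ω := rp ρ '' S with hRdef
  haveI : Finite R := (hS.image _).to_subtype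
  haveI : ∀ r : R, Finite (Γ ⧸ M r.1) := fun r =>
    @Subgroup.finite_quotient_of_finiteIndex _ _ _ (hMfi r.1)
  letI Y : Type (max u v) := (Σ r : R, Γ ⧸ M r.1) ⊕ PUnit.{max u v + 1}
  letI : SMul Γ Y :=
    ⟨fun a y => match y with
      | Sum.inl ⟨r, z⟩ => Sum.inl ⟨r, a • z⟩
      | Sum.inr u => Sum.inr u⟩
  have smul_inl : ∀ (a : Γ) (r : R) (z : Γ ⧸ M r.1),
      a • (Sum.inl ⟨r, z⟩ : Y) = Sum.inl ⟨r, a • z⟩ := fun a r z => rfl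
  have smul_inr : ∀ (a : Γ) (u : PUnit), a • (Sum.inr u : Y) = Sum.inr u := fun a u => rfl
  letI : MulAction Γ Y :=
    { one_smul := by
        rintro (⟨r, z⟩ | u)
        · rw [smul_inl, one_smul]
        · rw [smul_inr]
      mul_smul := by
        intro a b y
        rcases y with ⟨r, z⟩ | u
        · rw [smul_inl, smul_inl, smul_inl, mul_smul]
        · rw [smul_inr, smul_inr, smul_inr] }
  have node_eq : ∀ (r r' : R) (x x' : Γ), r = r' → x'⁻¹ * x ∈ M r.1 →
      (Sum.inl ⟨r, QuotientGroup.mk x⟩ : Y) = Sum.inl ⟨r', QuotientGroup.mk x'⟩ := by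
    rintro r r' x x' rfl hm
    have : (QuotientGroup.mk x : Γ ⧸ M r.1) = QuotientGroup.mk x' :=
      QuotientGroup.eq.2 (by simpa using (inv_mem hm))
    rw [this]
  have node_inj : ∀ (r r' : R) (x x' : Γ),
      (Sum.inl ⟨r, QuotientGroup.mk x⟩ : Y) = Sum.inl ⟨r', QuotientGroup.mk x'⟩ →
      r = r' ∧ x'⁻¹ * x ∈ M r.1 := by
    intro r r' x x' h
    have h1 := Sum.inl.inj h
    injection h1 with hc hz
    subst hc
    refine ⟨rfl, ?_⟩
    have := QuotientGroup.eq.1 (eq_of_heq hz)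
    simpa using (inv_mem this)
  letI ψ : Ω → Y := fun s =>
    if h : s ∈ S then Sum.inl ⟨⟨rp ρ s, ⟨s, h, rfl⟩⟩, QuotientGroup.mk (wit ρ s)⟩
    else Sum.inr PUnit.unit
  refine ⟨⟨Y, inferInstance, MulAction.toPermHom Γ Y, ψ, ?_, ?_⟩⟩
  · -- injectivity on S
    intro s hs s' hs' h
    simp only [ψ, dif_pos hs, dif_pos hs'] at h
    obtain ⟨hr, hm⟩ := node_inj _ _ _ _ h
    by_contra hne
    refine hBadM (rp ρ s) ((wit ρ s')⁻¹ * wit ρ s) ⟨s, hs, s', hs', hne, rfl, ?_, rfl⟩ hm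
    exact congrArg (fun c : R => c.1) hr |>.symm
  · -- equivariance
    intro a ha s hs hmem
    simp only [MulAction.toPermHom_apply, MulAction.toPerm_apply]
    simp only [ψ, dif_pos hs, dif_pos hmem]
    rw [smul_inl]
    have hz : a • (QuotientGroup.mk (wit ρ s) : Γ ⧸ M (rp ρ s)) =
        QuotientGroup.mk (a * wit ρ s) := rfl
    rw [hz]
    refine node_eq _ _ _ _ (Subtype.ext (rp_eq ρ a s).symm) ?_
    have hE : (wit ρ (ρ a s))⁻¹ * a * wit ρ s ∈ Egen ρ S A (rp ρ s) :=
      ⟨a, ha, s, hs, hmem, rfl, rfl⟩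
    have := hLM (rp ρ s) (Subgroup.subset_closure hE)
    rwa [mul_assoc] at this

section Glue

variable {ι : Type w} {Yf : ι → Type u} {Ω' : Type v} (S' : Set Ω') (ψf : ∀ i, Ω' → Yf i)

open Classical in
/-- Glue the family of finite sets along the images of `S'`. -/
noncomputable def glue (i : ι) (y : Yf i) : (Σ i, Yf i) ⊕ ↥S' :=
  if h : ∃ s : S', ψf i s = y then Sum.inr h.choose else Sum.inl ⟨i, y⟩

lemma glue_inj (i : ι) : Function.Injective (glue S' ψf i) := by
  intro y1 y2 h
  unfold glue at h
  by_cases h1 : ∃ s : S', ψf i s = y1 <;> by_cases h2 : ∃ s : S', ψf i s = y2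
  · rw [dif_pos h1, dif_pos h2] at h
    rw [← h1.choose_spec, ← h2.choose_spec, Sum.inr.inj h]
  · rw [dif_pos h1, dif_neg h2] at h
    exact absurd h (by simp)
  · rw [dif_neg h1, dif_pos h2] at h
    exact absurd h (by simp)
  · rw [dif_neg h1, dif_neg h2] at h
    exact sigma_mk_injective (Sum.inl.inj h)

lemma glue_psi (hinj : ∀ i, Set.InjOn (ψf i) S') (i : ι) (s : Ω') (hs : s ∈ S') :
    glue S' ψf i (ψf i s) = Sum.inr ⟨s, hs⟩ := by
  have hex : ∃ s' : S', ψf i s' = ψf i s := ⟨⟨s, hs⟩, rfl⟩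
  unfold glue
  rw [dif_pos hex]
  congr 1
  exact Subtype.ext (hinj i hex.choose.2 hs hex.choose_spec)

end Glue

end BurnsRom

set_option maxHeartbeats 2000000 in
/-- Burns–Romanovskii theorem: a finite free product of subgroup separable groups is
subgroup separable. -/
theorem subgroupSeparable_coprodI {ι : Type*} [Finite ι] {G : ι → Type*}
    [∀ i, Group (G i)]
    (hG : ∀ i, ∀ H : Subgroup (G i), H.FG →
      ∀ g : G i, g ∉ H → ∃ K : Subgroup (G i), K.FiniteIndex ∧ H ≤ K ∧ g ∉ K) :
    ∀ H : Subgroup (Monoid.CoprodI G), H.FG →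
      ∀ g : Monoid.CoprodI G, g ∉ H →
        ∃ K : Subgroup (Monoid.CoprodI G), K.FiniteIndex ∧ H ≤ K ∧ g ∉ K := by
  classical
  intro H hfg g hg
  obtain ⟨Tf, hT⟩ := hfg
  -- words representing elements
  have hword' : ∀ x : Monoid.CoprodI G, ∃ l : List (Σ i, G i),
      (l.map fun p => Monoid.CoprodI.of p.2).prod = x := by
    intro x
    induction x using Monoid.CoprodI.induction_on with
    | one => exact ⟨[], rfl⟩
    | of i m => exact ⟨[⟨i, m⟩], by simp⟩
    | mul x y hx hy =>
      obtain ⟨lx, hlx⟩ := hx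
      obtain ⟨ly, hly⟩ := hy
      exact ⟨lx ++ ly, by rw [List.map_append, List.prod_append, hlx, hly]⟩
  choose word hword using hword'
  set Q := Monoid.CoprodI G ⧸ H with hQdef
  set mkq : Monoid.CoprodI G → Q := QuotientGroup.mk with hmkq
  set WS : Set (Monoid.CoprodI G) := ↑Tf ∪ {g} with hWS
  have hWSfin : WS.Finite := Tf.finite_toSet.union (Set.finite_singleton g)
  set sufx : Monoid.CoprodI G → ℕ → Q := fun t n =>
    mkq (((word t).drop n).map fun p => Monoid.CoprodI.of p.2).prod with hsufx
  set S : Set Q := ⋃ t ∈ WS, sufx t '' Set.Iic (word t).length with hSdef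
  have hSfin : S.Finite := hWSfin.biUnion fun t _ => (Set.finite_Iic _).image _
  have hgWS : g ∈ WS := Or.inr rfl
  have hSmem : ∀ t ∈ WS, ∀ n ≤ (word t).length, sufx t n ∈ S := by
    intro t ht n hn
    exact Set.mem_biUnion ht ⟨n, hn, rfl⟩
  have hS1 : mkq 1 ∈ S := by
    have h := hSmem g hgWS (word g).length le_rfl
    rw [hsufx] at h
    simp only [List.drop_length, List.map_nil, List.prod_nil] at h
    exact h
  set A : ∀ i, Set (G i) := fun i => {a | ∃ t ∈ WS, Sigma.mk i a ∈ word t} with hA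
  have hAfin : ∀ i, (A i).Finite := by
    intro i
    have hsub : A i ⊆ ⋃ t ∈ WS, (fun a => (⟨i, a⟩ : Σ j, G j)) ⁻¹' {p | p ∈ word t} := by
      rintro a ⟨t, ht, hmem⟩
      exact Set.mem_biUnion ht hmem
    refine Set.Finite.subset (hWSfin.biUnion fun t _ => ?_) hsub
    exact Set.Finite.preimage (Set.injOn_of_injective sigma_mk_injective) (word t).finite_toSet
  set ρ : ∀ i, G i →* Equiv.Perm Q :=
    fun i => (MulAction.toPermHom (Monoid.CoprodI G) Q).comp Monoid.CoprodI.of with hρdef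
  have hρ : ∀ (i) (a : G i) (x : Monoid.CoprodI G),
      ρ i a (mkq x) = mkq (Monoid.CoprodI.of a * x) := fun i a x => rfl
  have pack : ∀ i, BurnsRom.SepExt (ρ i) S (A i) := fun i =>
    Classical.choice (BurnsRom.exists_sepExt (ρ i) S (A i) (hG i) hSfin (hAfin i))
  haveI : ∀ i, Finite (pack i).Y := fun i => (pack i).fin
  haveI : Finite ↥S := hSfin.to_subtype
  set X := (Σ i, (pack i).Y) ⊕ ↥S with hXdef
  haveI : Finite X := by infer_instance
  set emb : ∀ i, (pack i).Y → X := fun i => BurnsRom.glue S (fun j => (pack j).ψ) i with hemb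
  have emb_inj : ∀ i, Function.Injective (emb i) := fun i =>
    BurnsRom.glue_inj S (fun j => (pack j).ψ) i
  have emb_psi : ∀ (i) (s : Q) (hs : s ∈ S), emb i ((pack i).ψ s) = Sum.inr ⟨s, hs⟩ :=
    fun i s hs => BurnsRom.glue_psi S (fun j => (pack j).ψ) (fun j => (pack j).inj) i s hs
  set φ : ∀ i, G i →* Equiv.Perm X :=
    fun i => (Equiv.Perm.viaEmbeddingHom (⟨emb i, emb_inj i⟩ : (pack i).Y ↪ X)).comp (pack i).π with hφ
  set Φ : Monoid.CoprodI G →* Equiv.Perm X := Monoid.CoprodI.lift φ with hΦ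
  have hstep : ∀ (i) (a : G i) (s : Q) (hs : s ∈ S), a ∈ A i → ∀ hmem : ρ i a s ∈ S,
      Φ (Monoid.CoprodI.of a) (Sum.inr ⟨s, hs⟩ : X) = Sum.inr ⟨ρ i a s, hmem⟩ := by
    intro i a s hs ha hmem
    rw [hΦ, Monoid.CoprodI.lift_of]
    show Equiv.Perm.viaEmbeddingHom (⟨emb i, emb_inj i⟩ : (pack i).Y ↪ X) ((pack i).π a)
      (Sum.inr ⟨s, hs⟩) = _
    rw [← emb_psi i s hs]
    rw [Equiv.Perm.viaEmbeddingHom_apply]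
    show ((pack i).π a).viaEmbedding (⟨emb i, emb_inj i⟩ : (pack i).Y ↪ X)
      ((⟨emb i, emb_inj i⟩ : (pack i).Y ↪ X) ((pack i).ψ s)) = _
    rw [Equiv.Perm.viaEmbedding_apply]
    show emb i ((pack i).π a ((pack i).ψ s)) = _
    rw [(pack i).equiv a ha s hs hmem, emb_psi i _ hmem]
  have heval : ∀ l : List (Σ i, G i), (∀ p ∈ l, p.2 ∈ A p.1) →
      (∀ n ≤ l.length, mkq ((l.drop n).map fun p => Monoid.CoprodI.of p.2).prod ∈ S) →
      ∀ h0 : mkq ((l.map fun p => Monoid.CoprodI.of p.2).prod) ∈ S,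
      Φ ((l.map fun p => Monoid.CoprodI.of p.2).prod) (Sum.inr ⟨mkq 1, hS1⟩ : X) =
        Sum.inr ⟨mkq ((l.map fun p => Monoid.CoprodI.of p.2).prod), h0⟩ := by
    intro l
    induction l with
    | nil =>
      intro _ _ h0
      simp only [List.map_nil, List.prod_nil, map_one]
      rfl
    | cons p l ih =>
      intro h1 h2 h0
      have hl2 : ∀ n ≤ l.length, mkq ((l.drop n).map fun p => Monoid.CoprodI.of p.2).prod ∈ S :=
        fun n hn => h2 (n + 1) (by simpa using hn)
      have hls : mkq ((l.map fun p => Monoid.CoprodI.of p.2).prod) ∈ S := by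
        have := h2 1 (by simp)
        simpa using this
      have hprod : ((p :: l).map fun q => Monoid.CoprodI.of q.2).prod =
          Monoid.CoprodI.of p.2 * (l.map fun q => Monoid.CoprodI.of q.2).prod := by
        rw [List.map_cons, List.prod_cons]
      have h0' : mkq (Monoid.CoprodI.of p.2 * (l.map fun q => Monoid.CoprodI.of q.2).prod) ∈ S := by
        rw [← hprod]
        exact h0
      have hR : (Sum.inr ⟨mkq (((p :: l).map fun q => Monoid.CoprodI.of q.2).prod), h0⟩ : X) =
          Sum.inr ⟨mkq (Monoid.CoprodI.of p.2 * (l.map fun q => Monoid.CoprodI.of q.2).prod),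
            h0'⟩ :=
        congrArg Sum.inr (Subtype.ext (congrArg mkq hprod))
      rw [hR, hprod, map_mul, Equiv.Perm.mul_apply]
      have e1 := ih (fun q hq => h1 q (List.mem_cons_of_mem p hq)) hl2 hls
      rw [e1]
      have hmem : ρ p.1 p.2 (mkq ((l.map fun q => Monoid.CoprodI.of q.2).prod)) ∈ S := by
        rw [hρ]
        exact h0'
      rw [hstep p.1 p.2 _ hls (h1 p List.mem_cons_self) hmem]
      exact congrArg Sum.inr (Subtype.ext (hρ p.1 p.2 _))
  have hmkt : ∀ t, t ∈ WS → mkq t ∈ S := by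
    intro t ht
    have h := hSmem t ht 0 (Nat.zero_le _)
    rw [hsufx] at h
    simp only [List.drop_zero] at h
    rwa [hword t] at h
  have heval' : ∀ t, ∀ ht : t ∈ WS,
      Φ t (Sum.inr ⟨mkq 1, hS1⟩ : X) = Sum.inr ⟨mkq t, hmkt t ht⟩ := by
    intro t ht
    have h1 : ∀ p ∈ word t, p.2 ∈ A p.1 := by
      intro p hp
      exact ⟨t, ht, by rwa [Sigma.eta]⟩
    have h2 : ∀ n ≤ (word t).length,
        mkq (((word t).drop n).map fun p => Monoid.CoprodI.of p.2).prod ∈ S :=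
      fun n hn => hSmem t ht n hn
    have h0 : mkq (((word t).map fun p => Monoid.CoprodI.of p.2).prod) ∈ S := by
      have h := hSmem t ht 0 (Nat.zero_le _)
      rw [hsufx] at h
      simpa only [List.drop_zero] using h
    have hthis := heval (word t) h1 h2 h0
    have e2 : (Sum.inr ⟨mkq (((word t).map fun p => Monoid.CoprodI.of p.2).prod), h0⟩ : X) =
        Sum.inr ⟨mkq t, hmkt t ht⟩ :=
      congrArg Sum.inr (Subtype.ext (congrArg mkq (hword t)))
    rw [e2] at hthis
    rw [hword t] at hthis
    exact hthis
  letI : MulAction (Monoid.CoprodI G) X := MulAction.compHom X Φ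
  have hsmul : ∀ (x : Monoid.CoprodI G) (y : X), x • y = Φ x y := fun x y => rfl
  refine ⟨MulAction.stabilizer (Monoid.CoprodI G) (Sum.inr ⟨mkq 1, hS1⟩ : X), ?_, ?_, ?_⟩
  · constructor
    rw [MulAction.index_stabilizer]
    refine (Set.ncard_pos (Set.toFinite _)).2 ⟨_, MulAction.mem_orbit_self _⟩ |>.ne'
  · rw [← hT]
    rw [Subgroup.closure_le]
    intro t ht
    have htWS : t ∈ WS := Or.inl ht
    rw [SetLike.mem_coe, MulAction.mem_stabilizer_iff, hsmul, heval' t htWS]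
    refine congrArg Sum.inr (Subtype.ext ?_)
    show mkq t = mkq 1
    have htH : t ∈ H := hT ▸ Subgroup.subset_closure ht
    exact QuotientGroup.eq.2 (by simpa using inv_mem htH)
  · intro hK
    rw [MulAction.mem_stabilizer_iff, hsmul, heval' g hgWS] at hK
    have := congrArg Subtype.val (Sum.inr.inj hK)
    have hQeq : mkq g = mkq 1 := this
    have := QuotientGroup.eq.1 hQeq
    simp only [mul_one] at this
    exact hg (by simpa using inv_mem this)
end
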